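/- arXiv:0707.2729 — 6 statements merged into one kernel-verified Lean document; each statement's English description precedes it below -/
import Mathlib

section
/- (Lagrange/Green identity for the q-Sturm-Liouville operator) Let F satisfy Δ_q F(x) + [λ - V(x)] F(x) = 0 and G satisfy Δ_q G(x) + [λ' - V(x)] G(x) = 0 on ℝ_q^+. Then for b ∈ ℝ_q^+, (λ' - λ) ∫_0^b F(x) G(x) d_q x = W_0(F,G) - W_b(F,G), where W_x(F,G) = ((1-q)²/q)[F(x) (D_q G)(x/q) - G(x) (D_q F)(x/q)] and W_0 denotes the limit as x → 0 along ℝ_q^+. -/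
open Filter Topology

/-- The `q`-derivative. -/
noncomputable def qDeriv (q : ℝ) (f : ℝ → ℂ) (x : ℝ) : ℂ :=
  (f x - f (q * x)) / (((1 - q) * x : ℝ) : ℂ)

/-- The `q`-Laplace operator
`Δ_q f(x) = (1/x²)[f(x/q) - ((1+q)/q) f(x) + (1/q) f(qx)]`. -/
noncomputable def qLap (q : ℝ) (f : ℝ → ℂ) (x : ℝ) : ℂ :=
  ((1 / x ^ 2 : ℝ) : ℂ) *
    (f (x / q) - (((1 + q) / q : ℝ) : ℂ) * f x + ((1 / q : ℝ) : ℂ) * f (q * x))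

/-- The `q`-Wronskian
`W_x(F,G) = ((1-q)²/q)[F(x)(D_q G)(x/q) - G(x)(D_q F)(x/q)]`. -/
noncomputable def qWronskian (q : ℝ) (F G : ℝ → ℂ) (x : ℝ) : ℂ :=
  (((1 - q) ^ 2 / q : ℝ) : ℂ) *
    (F x * qDeriv q G (x / q) - G x * qDeriv q F (x / q))

/-- Jackson integral `∫_0^b f d_q x = (1-q) Σ_{n≥0} qⁿ b f(bqⁿ)`. -/
noncomputable def jackson0b (q : ℝ) (f : ℝ → ℂ) (b : ℝ) : ℂ :=
  ((1 - q : ℝ) : ℂ) * ∑' n : ℕ, ((q ^ n * b : ℝ) : ℂ) * f (b * q ^ n)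

lemma wronskian_diff (q x : ℝ) (hq : q ≠ 0) (h1q : (1:ℝ) - q ≠ 0) (hx : x ≠ 0)
    (F G : ℝ → ℂ) :
    qWronskian q F G (q * x) - qWronskian q F G x
      = (((1 - q) * x : ℝ) : ℂ) * (G x * qLap q F x - F x * qLap q G x) := by
  have h1 : q * x / q = x := by field_simp
  have h2 : q * (x / q) = x := by field_simp
  unfold qWronskian qDeriv qLap
  rw [h1, h2]
  have hxC : (x : ℂ) ≠ 0 := Complex.ofReal_ne_zero.2 hx
  have hqC : (q : ℂ) ≠ 0 := Complex.ofReal_ne_zero.2 hq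
  have h1qC : ((1 - q : ℝ) : ℂ) ≠ 0 := Complex.ofReal_ne_zero.2 h1q
  have h3 : ((x : ℂ) - q * x) ≠ 0 := by
    have : ((x : ℂ) - q * x) = ((1 - q : ℝ) : ℂ) * x := by push_cast; ring
    rw [this]; exact mul_ne_zero h1qC hxC
  have h1qC' : (1 - (q:ℂ)) ≠ 0 := by push_cast at h1qC; exact h1qC
  push_cast
  field_simp [h1qC', hxC, hqC]
  ring

/-- Lagrange/Green identity: if `Δ_q F + (λ - V)F = 0` and `Δ_q G + (λ' - V)G = 0` on
`ℝ_q^+`, then for `b ∈ ℝ_q^+`,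
`(λ' - λ) ∫_0^b F G d_q x = W_0(F,G) - W_b(F,G)`,
where `W_0` is the limit of the `q`-Wronskian as `x → 0` along `ℝ_q^+`. -/
theorem stmt3 (q : ℝ) (hq0 : 0 < q) (hq1 : q < 1) (V : ℝ → ℝ) (F G : ℝ → ℂ)
    (lam lam' : ℂ)
    (hF : ∀ n : ℤ, qLap q F (q ^ n) + (lam - (V (q ^ n) : ℂ)) * F (q ^ n) = 0)
    (hG : ∀ n : ℤ, qLap q G (q ^ n) + (lam' - (V (q ^ n) : ℂ)) * G (q ^ n) = 0)
    (k : ℤ) (b : ℝ) (hb : b = q ^ k)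
    (W0 : ℂ)
    (hW0 : Tendsto (fun n : ℕ => qWronskian q F G (q ^ n)) atTop (𝓝 W0))
    (hS : Summable (fun n : ℕ => ((q ^ n * b : ℝ) : ℂ) * (F (b * q ^ n) * G (b * q ^ n)))) :
    (lam' - lam) * jackson0b q (fun x => F x * G x) b = W0 - qWronskian q F G b := by
  classical
  have hqne : q ≠ 0 := ne_of_gt hq0
  have h1q : (1 : ℝ) - q ≠ 0 := by linarith
  set W : ℝ → ℂ := qWronskian q F G with hWdef
  set g : ℕ → ℂ := fun n => W (q ^ (k + (n : ℤ))) with hgdef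
  -- key identity at each point q^m
  have key2 : ∀ m : ℤ, W (q * q ^ m) - W (q ^ m)
      = (lam' - lam) * (((1 - q) * q ^ m : ℝ) : ℂ) * (F (q ^ m) * G (q ^ m)) := by
    intro m
    have hx : (q : ℝ) ^ m ≠ 0 := zpow_ne_zero m hqne
    rw [hWdef, wronskian_diff q (q ^ m) hqne h1q hx F G]
    have eF : qLap q F (q ^ m) = ((V (q ^ m) : ℂ) - lam) * F (q ^ m) := by
      linear_combination hF m
    have eG : qLap q G (q ^ m) = ((V (q ^ m) : ℂ) - lam') * G (q ^ m) := by
      linear_combination hG m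
    rw [eF, eG]
    push_cast
    ring
  -- arguments
  have harg : ∀ n : ℕ, (b * q ^ n : ℝ) = q ^ (k + (n : ℤ)) := by
    intro n
    rw [hb, zpow_add₀ hqne, zpow_natCast]
  have hqmul : ∀ n : ℕ, q * q ^ (k + (n : ℤ)) = q ^ (k + ((n : ℕ) + 1 : ℤ)) := by
    intro n
    rw [mul_comm, ← zpow_add_one₀ hqne]
    ring_nf
  -- the summand is a telescoping difference
  set c : ℂ := (lam' - lam) * ((1 - q : ℝ) : ℂ) with hcdef
  have hterm : ∀ n : ℕ,
      c * (((q ^ n * b : ℝ) : ℂ) * (F (b * q ^ n) * G (b * q ^ n))) = g (n + 1) - g n := by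
    intro n
    have h1 : g (n + 1) - g n = W (q * q ^ (k + (n : ℤ))) - W (q ^ (k + (n : ℤ))) := by
      rw [hgdef]
      simp only []
      rw [hqmul n]
      norm_num
    rw [h1, key2 (k + (n : ℤ)), ← harg n, hcdef]
    push_cast
    ring
  -- g tends to W0
  have htoNat : Tendsto (fun n : ℕ => (k + (n : ℤ)).toNat) atTop atTop := by
    refine tendsto_atTop.2 fun m => eventually_atTop.2 ⟨m + (-k).toNat, fun n hn => ?_⟩
    omega
  have hg_ev : (fun n : ℕ => qWronskian q F G (q ^ ((k + (n : ℤ)).toNat))) =ᶠ[atTop] g := by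
    filter_upwards [eventually_ge_atTop (-k).toNat] with n hn
    have hk : (0 : ℤ) ≤ k + n := by omega
    have : ((q : ℝ) ^ ((k + (n : ℤ)).toNat) : ℝ) = q ^ (k + (n : ℤ)) := by
      rw [← zpow_natCast, Int.toNat_of_nonneg hk]
    rw [hgdef]; simp only [this, hWdef]
  have hg : Tendsto g atTop (𝓝 W0) :=
    Tendsto.congr' hg_ev (hW0.comp htoNat)
  -- summability and telescoping
  have hSsum : Summable (fun n : ℕ => g (n + 1) - g n) := by
    have := hS.mul_left c
    exact this.congr fun n => hterm n
  have htel : Tendsto (fun N : ℕ => ∑ i ∈ Finset.range N, (g (i + 1) - g i)) atTop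
      (𝓝 (W0 - g 0)) := by
    have heq : (fun N : ℕ => ∑ i ∈ Finset.range N, (g (i + 1) - g i))
        = fun N => g N - g 0 := by
      funext N; exact Finset.sum_range_sub g N
    rw [heq]
    exact hg.sub_const (g 0)
  have htsum : (∑' n : ℕ, (g (n + 1) - g n)) = W0 - g 0 :=
    tendsto_nhds_unique hSsum.hasSum.tendsto_sum_nat htel
  -- conclude
  have hg0 : g 0 = qWronskian q F G b := by
    rw [hgdef]
    simp only [Nat.cast_zero, add_zero, hWdef, hb]
  rw [jackson0b]
  calc (lam' - lam) * (((1 - q : ℝ) : ℂ) *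
        ∑' n : ℕ, ((q ^ n * b : ℝ) : ℂ) * (F (b * q ^ n) * G (b * q ^ n)))
      = ∑' n : ℕ, c * (((q ^ n * b : ℝ) : ℂ) * (F (b * q ^ n) * G (b * q ^ n))) := by
        rw [tsum_mul_left, hcdef]; ring
    _ = ∑' n : ℕ, (g (n + 1) - g n) := by exact tsum_congr hterm
    _ = W0 - g 0 := htsum
    _ = W0 - qWronskian q F G b := by rw [hg0]
end

section
/- If F satisfies Δ_q F(x) + [λ - V(x)] F(x) = 0 on ℝ_q^+ with V real-valued and λ = μ + iν, then 2ν ∫_0^b |F(x)|² d_q x = i W_0(F, F̄) - i W_b(F, F̄), where F̄ is the complex conjugate of F. -/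
/-!
On the lattice `ℝ_q^+` the `q`-Wronskian obeys a discrete Lagrange identity:
`W(F,G)(x) - W(F,G)(qx) = (1-q)x (F Δ_q G - G Δ_q F)(x)`. For `G = F̄` the eigenvalue equation,
with `V` real, turns the right-hand side into `2iν (1-q) x |F(x)|²`, the general term of the
Jackson integral. Summing over `x = bqⁿ` telescopes to `W_b - W_0`.
-/

open Filter Topology Complex

/-- Real-valued Jackson integral `∫_0^b g d_q x = (1-q) Σ_{n≥0} qⁿ b g(bqⁿ)`. -/
noncomputable def jackson0bR (q : ℝ) (g : ℝ → ℝ) (b : ℝ) : ℝ :=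
  (1 - q) * ∑' n : ℕ, q ^ n * b * g (b * q ^ n)

open ComplexConjugate

theorem hasSum_sub_succ_of_tendsto {E : Type*} [AddCommGroup E] [TopologicalSpace E]
    [IsTopologicalAddGroup E] [T2Space E] {w : ℕ → E} {L : E}
    (hw : Tendsto w atTop (𝓝 L)) (hs : Summable fun n => w n - w (n + 1)) :
    HasSum (fun n => w n - w (n + 1)) (w 0 - L) := by
  have hpartial := hs.hasSum.tendsto_sum_nat
  simp only [Finset.sum_range_sub'] at hpartial
  exact tendsto_nhds_unique hpartial (tendsto_const_nhds.sub hw) ▸ hs.hasSum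

theorem Filter.Tendsto.comp_zpow_mul_pow {G₀ X : Type*} [GroupWithZero G₀] {f : G₀ → X}
    {l : Filter X} {q : G₀} (hq : q ≠ 0) (k : ℤ)
    (h : Tendsto (fun n : ℕ => f (q ^ n)) atTop l) :
    Tendsto (fun n : ℕ => f (q ^ k * q ^ n)) atTop l := by
  have hshift : Tendsto (fun n : ℕ => (k + n).toNat) atTop atTop :=
    tendsto_atTop_atTop.2 fun M => ⟨M + k.natAbs, fun n hn => by omega⟩
  refine (h.comp hshift).congr' ?_
  filter_upwards [eventually_ge_atTop k.natAbs] with n hn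
  rw [Function.comp_apply, ← zpow_natCast q (k + n).toNat, Int.toNat_of_nonneg (by omega),
    zpow_add₀ hq, zpow_natCast]

section QCalculus

variable {q : ℝ}

theorem qWronskian_eq (hq0 : q ≠ 0) (hq1 : q ≠ 1) (F G : ℝ → ℂ) {x : ℝ} (hx : x ≠ 0) :
    qWronskian q F G x = (((1 - q) / x : ℝ) : ℂ) * (F x * G (x / q) - G x * F (x / q)) := by
  have hq1' : (1 - q : ℂ) ≠ 0 := sub_ne_zero.2 (by exact_mod_cast hq1.symm)
  have hq0' : (q : ℂ) ≠ 0 := by exact_mod_cast hq0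
  have hx' : (x : ℂ) ≠ 0 := by exact_mod_cast hx
  simp only [qWronskian, qDeriv, mul_div_cancel₀ x hq0]
  push_cast
  field_simp
  ring

theorem qWronskian_sub_qWronskian_mul (hq0 : q ≠ 0) (hq1 : q ≠ 1) (F G : ℝ → ℂ) {x : ℝ}
    (hx : x ≠ 0) :
    qWronskian q F G x - qWronskian q F G (q * x)
      = (((1 - q) * x : ℝ) : ℂ) * (F x * qLap q G x - G x * qLap q F x) := by
  have hq0' : (q : ℂ) ≠ 0 := by exact_mod_cast hq0
  have hx' : (x : ℂ) ≠ 0 := by exact_mod_cast hx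
  rw [qWronskian_eq hq0 hq1 F G hx, qWronskian_eq hq0 hq1 F G (mul_ne_zero hq0 hx),
    mul_div_cancel_left₀ x hq0]
  simp only [qLap]
  push_cast
  field_simp
  ring

theorem qLap_conj (F : ℝ → ℂ) (x : ℝ) :
    qLap q (fun y => conj (F y)) x = conj (qLap q F x) := by
  simp only [qLap, map_mul, map_sub, map_add, conj_ofReal]

theorem mul_qLap_conj_sub_conj_mul_qLap {F : ℝ → ℂ} {x : ℝ} {lam : ℂ} {v : ℝ}
    (hF : qLap q F x + (lam - v) * F x = 0) :
    F x * qLap q (fun y => conj (F y)) x - conj (F x) * qLap q F x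
      = 2 * lam.im * I * (‖F x‖ ^ 2 : ℝ) := by
  have hLap : qLap q F x = (v - lam) * F x := by linear_combination hF
  have hnorm : F x * conj (F x) = (‖F x‖ ^ 2 : ℝ) := by
    rw [ofReal_pow, ← mul_conj']
  have hsub : lam - conj lam = 2 * lam.im * I := by rw [sub_conj]; push_cast; ring
  rw [qLap_conj, hLap, map_mul, map_sub, conj_ofReal, ← hnorm]
  linear_combination (F x * conj (F x)) * hsub

end QCalculus

/-- If `Δ_q F + (λ - V)F = 0` on `ℝ_q^+` with `V` real-valued and `λ = μ + iν`, then
`2ν ∫_0^b |F|² d_q x = i W_0(F, F̄) - i W_b(F, F̄)`. -/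
theorem stmt4 (q : ℝ) (hq0 : 0 < q) (hq1 : q < 1) (V : ℝ → ℝ) (F : ℝ → ℂ)
    (mu nu : ℝ)
    (hF : ∀ n : ℤ, qLap q F (q ^ n)
      + (((mu : ℂ) + (nu : ℂ) * Complex.I) - (V (q ^ n) : ℂ)) * F (q ^ n) = 0)
    (k : ℤ) (b : ℝ) (hb : b = q ^ k)
    (W0 : ℂ)
    (hW0 : Tendsto (fun n : ℕ =>
      qWronskian q F (fun x => (starRingEnd ℂ) (F x)) (q ^ n)) atTop (𝓝 W0))
    (hS : Summable (fun n : ℕ => q ^ n * b * ‖F (b * q ^ n)‖ ^ 2)) :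
    ((2 * nu * jackson0bR q (fun x => ‖F x‖ ^ 2) b : ℝ) : ℂ)
      = Complex.I * W0
        - Complex.I * qWronskian q F (fun x => (starRingEnd ℂ) (F x)) b := by
  set w : ℕ → ℂ := fun n => qWronskian q F (fun x => conj (F x)) (b * q ^ n)
  have hstep (n : ℕ) : w n - w (n + 1)
      = 2 * nu * I * ((1 - q) * (q ^ n * b * ‖F (b * q ^ n)‖ ^ 2) : ℝ) := by
    have hx : b * q ^ n ≠ 0 := by rw [hb]; positivity
    have hlattice : b * q ^ n = q ^ (k + n) := by rw [hb, zpow_add₀ hq0.ne', zpow_natCast]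
    have heig := mul_qLap_conj_sub_conj_mul_qLap (hlattice ▸ hF (k + n))
    rw [show ((mu : ℂ) + nu * I).im = nu by simp] at heig
    have hsucc : b * q ^ (n + 1) = q * (b * q ^ n) := by ring
    simp only [w, hsucc]
    rw [qWronskian_sub_qWronskian_mul hq0.ne' hq1.ne _ _ hx, heig]
    push_cast
    ring
  have hsum : HasSum (fun n => w n - w (n + 1)) (w 0 - W0) :=
    hasSum_sub_succ_of_tendsto (by simpa [w, hb] using hW0.comp_zpow_mul_pow hq0.ne' k)
      (by simp_rw [hstep]; exact (summable_ofReal.2 (hS.mul_left (1 - q))).mul_left _)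
  have htotal : 2 * nu * I * (jackson0bR q (fun x => ‖F x‖ ^ 2) b : ℂ) = w 0 - W0 := by
    rw [← hsum.tsum_eq, jackson0bR, ← tsum_mul_left, ofReal_tsum, ← tsum_mul_left]
    exact tsum_congr fun n => (hstep n).symm
  set J := jackson0bR q (fun x => ‖F x‖ ^ 2) b
  simp only [w, pow_zero, mul_one] at htotal
  push_cast
  linear_combination (-I) * htotal + 2 * nu * (J : ℂ) * I_sq
end

section
/- (Weyl limit-circle implies all solutions L²) If ν ≠ 0 and the radii r_b = (2|ν| ∫_0^b |φ(x)|² d_q x)^{-1} tend to a positive limit as b → ∞ along ℝ_q^+, then φ ∈ L²(ℝ_q^+); consequently, since ψ = θ + mφ ∈ L²(ℝ_q^+), every solution of Δ_q f + (λ-V)f = 0 (each being a linear combination of θ and φ) belongs to L²(ℝ_q^+). -/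
open Filter Topology

/-!
Along `b = q^{-N}` the Jackson integral `∫_0^b |φ|² d_q x` is `(1 - q)` times the tail
`∑_{n ≥ -N} q^n |φ(q^n)|²` of the series defining `‖φ‖²` in `L²(ℝ_q^+)`. Since
`r_b → r > 0`, these integrals converge to `(2|ν| r)⁻¹`, so the tails are bounded and the
nonnegative series converges: `φ ∈ L²(ℝ_q^+)`. Every `aθ + bφ = aψ + (b - am)φ` is then a
linear combination of two elements of `L²(ℝ_q^+)`.
-/

section WeightedSq

variable {ι E : Type*} [SeminormedAddCommGroup E] {w : ι → ℝ} {f g : ι → E}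

theorem Summable.mul_sq_norm_add (hw : 0 ≤ w) (hf : Summable fun i => w i * ‖f i‖ ^ 2)
    (hg : Summable fun i => w i * ‖g i‖ ^ 2) :
    Summable fun i => w i * ‖f i + g i‖ ^ 2 := by
  refine ((hf.add hg).mul_left 2).of_nonneg_of_le (fun i => mul_nonneg (hw i) (sq_nonneg _))
    fun i => ?_
  calc w i * ‖f i + g i‖ ^ 2 ≤ w i * (2 * (‖f i‖ ^ 2 + ‖g i‖ ^ 2)) :=
        mul_le_mul_of_nonneg_left
          ((pow_le_pow_left₀ (norm_nonneg _) (norm_add_le _ _) 2).trans add_sq_le) (hw i)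
    _ = 2 * (w i * ‖f i‖ ^ 2 + w i * ‖g i‖ ^ 2) := by ring

theorem Summable.mul_sq_norm_smul {𝕜 : Type*} [NormedField 𝕜] [NormedSpace 𝕜 E]
    (hf : Summable fun i => w i * ‖f i‖ ^ 2) (c : 𝕜) :
    Summable fun i => w i * ‖c • f i‖ ^ 2 :=
  (hf.mul_left (‖c‖ ^ 2)).congr fun i => by rw [norm_smul]; ring

end WeightedSq

/-- The tails `n ↦ f (n - N)` exhaust `ℤ` as `N → ∞`, so bounded tail sums bound every
finite partial sum of `f`. -/
theorem summable_of_isBoundedUnder_tsum_shift {f : ℤ → ℝ} (hf : 0 ≤ f)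
    (hs : ∀ N : ℕ, Summable fun n : ℕ => f (n - N))
    (hb : IsBoundedUnder (· ≤ ·) atTop fun N : ℕ => ∑' n : ℕ, f (n - N)) : Summable f := by
  obtain ⟨C, hC⟩ := hb
  refine summable_of_sum_le hf (c := C) fun u => ?_
  have hcover : ∀ᶠ N : ℕ in atTop, ∀ m ∈ u, -m ≤ N :=
    u.eventually_all.2 fun m _ => tendsto_natCast_atTop_atTop.eventually_ge_atTop (-m)
  obtain ⟨N, hCN, hN⟩ := ((eventually_map.1 hC).and hcover).exists
  have hrange : ∀ m ∈ u, m ∈ Set.range fun n : ℕ => (n : ℤ) - N := fun m hm =>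
    ⟨(m + N).toNat, by
      show ((m + N).toNat : ℤ) - N = m
      rw [Int.toNat_of_nonneg (by linarith [hN m hm])]; ring⟩
  calc ∑ m ∈ u, f m
      = ∑ n ∈ u.preimage (fun n : ℕ => (n : ℤ) - N) (by intro a _ b _ h; simpa using h),
          f (n - N) :=
        (Finset.sum_preimage _ _ _ f fun m hm hm' => absurd (hrange m hm) hm').symm
    _ ≤ ∑' n : ℕ, f (n - N) := (hs N).sum_le_tsum _ fun n _ => hf _
    _ ≤ C := hCN

section Jackson

variable {q : ℝ} (hq : q ≠ 0) (g : ℝ → ℝ)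
include hq

theorem jackson_summand_zpow_neg (N n : ℕ) :
    q ^ n * q ^ (-(N : ℤ)) * g (q ^ (-(N : ℤ)) * q ^ n) =
      q ^ ((n : ℤ) - N) * g (q ^ ((n : ℤ) - N)) := by
  rw [← zpow_natCast q n, ← zpow_add₀ hq, mul_comm (q ^ (-(N : ℤ))), ← zpow_add₀ hq,
    ← sub_eq_add_neg]

theorem jackson0bR_zpow_neg (N : ℕ) :
    jackson0bR q g (q ^ (-(N : ℤ))) =
      (1 - q) * ∑' n : ℕ, q ^ ((n : ℤ) - N) * g (q ^ ((n : ℤ) - N)) := by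
  rw [jackson0bR, tsum_congr (jackson_summand_zpow_neg hq g N)]

end Jackson

theorem stmt9_general (q : ℝ) (hq0 : 0 < q) (hq1 : q < 1) (nu : ℝ) (hnu : nu ≠ 0)
    (theta phi : ℝ → ℂ) (m : ℂ)
    (hSb : ∀ N : ℕ, Summable (fun n : ℕ => q ^ n * (q : ℝ) ^ (-(N : ℤ)) *
      ‖phi ((q : ℝ) ^ (-(N : ℤ)) * q ^ n)‖ ^ 2))
    (r : ℝ) (hr : 0 < r)
    (hrb : Tendsto (fun N : ℕ =>
      (2 * |nu| * jackson0bR q (fun x => ‖phi x‖ ^ 2) ((q : ℝ) ^ (-(N : ℤ))))⁻¹)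
      atTop (𝓝 r))
    (hpsi : Summable (fun n : ℤ =>
      (q : ℝ) ^ n * ‖theta ((q : ℝ) ^ n) + m * phi ((q : ℝ) ^ n)‖ ^ 2)) :
    Summable (fun n : ℤ => (q : ℝ) ^ n * ‖phi ((q : ℝ) ^ n)‖ ^ 2) ∧
    ∀ a b : ℂ, Summable (fun n : ℤ =>
      (q : ℝ) ^ n * ‖a * theta ((q : ℝ) ^ n) + b * phi ((q : ℝ) ^ n)‖ ^ 2) := by
  set F : ℤ → ℝ := fun n => q ^ n * ‖phi (q ^ n)‖ ^ 2
  have hw : (0 : ℤ → ℝ) ≤ fun n => q ^ n := fun n => zpow_nonneg hq0.le n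
  have hk : 2 * |nu| * (1 - q) ≠ 0 := by
    have := abs_pos.2 hnu
    have : 0 < 1 - q := by linarith
    positivity
  have htail (N : ℕ) : Summable fun n : ℕ => F (n - N) :=
    (hSb N).congr (jackson_summand_zpow_neg hq0.ne' (fun x => ‖phi x‖ ^ 2) N)
  have hlim : Tendsto (fun N : ℕ => 2 * |nu| * (1 - q) * ∑' n : ℕ, F (n - N)) atTop
      (𝓝 r⁻¹) := by
    convert hrb.inv₀ hr.ne' using 2 with N
    rw [inv_inv, jackson0bR_zpow_neg hq0.ne', mul_assoc]
  have hbdd : IsBoundedUnder (· ≤ ·) atTop fun N : ℕ => ∑' n : ℕ, F (n - N) :=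
    ((hlim.const_mul (2 * |nu| * (1 - q))⁻¹).congr fun N =>
      inv_mul_cancel_left₀ hk _).isBoundedUnder_le
  have hphi : Summable F :=
    summable_of_isBoundedUnder_tsum_shift (fun n => mul_nonneg (hw n) (sq_nonneg _)) htail hbdd
  refine ⟨hphi, fun a b => ?_⟩
  refine ((hpsi.mul_sq_norm_smul a).mul_sq_norm_add hw (hphi.mul_sq_norm_smul (b - a * m))).congr
    fun n => ?_
  rw [smul_eq_mul, smul_eq_mul]
  congr 3
  ring

/-- Weyl limit-circle case: if the radii `r_b = (2|ν| ∫_0^b |φ|² d_q x)⁻¹` tend to a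
positive limit as `b → ∞` along `ℝ_q^+` and `ψ = θ + mφ ∈ L²(ℝ_q^+)`, then
`φ ∈ L²(ℝ_q^+)` and every solution `aθ + bφ` of `Δ_q f + (λ-V)f = 0` is in
`L²(ℝ_q^+)`. -/
theorem stmt9 (q : ℝ) (hq0 : 0 < q) (hq1 : q < 1) (V : ℝ → ℝ) (mu nu : ℝ) (hnu : nu ≠ 0)
    (theta phi : ℝ → ℂ) (m : ℂ)
    (htheta : ∀ n : ℤ, qLap q theta (q ^ n)
      + (((mu : ℂ) + (nu : ℂ) * Complex.I) - (V (q ^ n) : ℂ)) * theta (q ^ n) = 0)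
    (hphi : ∀ n : ℤ, qLap q phi (q ^ n)
      + (((mu : ℂ) + (nu : ℂ) * Complex.I) - (V (q ^ n) : ℂ)) * phi (q ^ n) = 0)
    (hSb : ∀ N : ℕ, Summable (fun n : ℕ => q ^ n * (q : ℝ) ^ (-(N : ℤ)) *
      ‖phi ((q : ℝ) ^ (-(N : ℤ)) * q ^ n)‖ ^ 2))
    (r : ℝ) (hr : 0 < r)
    (hrb : Tendsto (fun N : ℕ =>
      (2 * |nu| * jackson0bR q (fun x => ‖phi x‖ ^ 2) ((q : ℝ) ^ (-(N : ℤ))))⁻¹)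
      atTop (𝓝 r))
    (hpsi : Summable (fun n : ℤ =>
      (q : ℝ) ^ n * ‖theta ((q : ℝ) ^ n) + m * phi ((q : ℝ) ^ n)‖ ^ 2)) :
    Summable (fun n : ℤ => (q : ℝ) ^ n * ‖phi ((q : ℝ) ^ n)‖ ^ 2) ∧
    ∀ a b : ℂ, Summable (fun n : ℤ =>
      (q : ℝ) ^ n * ‖a * theta ((q : ℝ) ^ n) + b * phi ((q : ℝ) ^ n)‖ ^ 2) :=
  stmt9_general q hq0 hq1 nu hnu theta phi m hSb r hr hrb hpsi
end

section
/- (Phragmén–Lindelöf type bound on a square) Let F be analytic on the closed square {λ = μ+iν : |μ| ≤ r, |ν| ≤ r} and suppose |F(λ)| ≤ M/|ν| throughout the square (for ν ≠ 0). Then |F(iν)| ≤ 3M/r for all real ν with |ν| ≤ r. In fact |F(λ)| ≤ 3rM/|λ² - r²| wherever defined in the square. -/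
/-!
`G(λ) = (λ² - r²) F(λ)` is holomorphic on the square, and on its boundary
`|λ² - r²| ≤ 3r|ν|`: on the horizontal edges `|ν| = r` and `|λ|² ≤ 2r²`, while on the vertical
edge `μ = ±r` one factor of `(λ - r)(λ + r)` has modulus `|ν|` and the other at most `3r`.
Hence `|G| ≤ 3rM` on the boundary, so on the whole square by the maximum modulus principle;
dividing by `|λ² - r²|`, which is at least `r²` on the imaginary axis, gives both bounds.
-/

open Complex Set

namespace Complex

theorem norm_sq_sub_sq_le_of_re_eq {r : ℝ} {w : ℂ} (hre : w.re = r) (him : |w.im| ≤ r) :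
    ‖w ^ 2 - (r : ℂ) ^ 2‖ ≤ 3 * r * |w.im| := by
  have hr : 0 ≤ r := (abs_nonneg _).trans him
  have hsub : ‖w - r‖ = |w.im| := by
    have : w - r = w.im * I := Complex.ext (by simp [hre]) (by simp)
    rw [this, norm_mul, norm_I, mul_one, norm_real, Real.norm_eq_abs]
  have hadd : ‖w + r‖ ≤ 3 * r := calc
    ‖w + r‖ ≤ |(w + r).re| + |(w + r).im| := norm_le_abs_re_add_abs_im _
    _ = 2 * r + |w.im| := by simp [hre, ← two_mul, abs_of_nonneg hr]
    _ ≤ 3 * r := by linarith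
  calc ‖w ^ 2 - (r : ℂ) ^ 2‖ = ‖w - r‖ * ‖w + r‖ := by rw [← norm_mul]; ring_nf
    _ ≤ |w.im| * (3 * r) := by rw [hsub]; gcongr
    _ = 3 * r * |w.im| := by ring

theorem norm_sq_sub_sq_le_of_abs_re_eq {r : ℝ} {w : ℂ} (hre : |w.re| = r) (him : |w.im| ≤ r) :
    ‖w ^ 2 - (r : ℂ) ^ 2‖ ≤ 3 * r * |w.im| := by
  rcases abs_eq ((abs_nonneg _).trans him) |>.1 hre with h | h
  · exact norm_sq_sub_sq_le_of_re_eq h him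
  · simpa using norm_sq_sub_sq_le_of_re_eq (w := -w) (by simp [h]) (by simpa using him)

theorem norm_sq_sub_sq_le_of_abs_im_eq {r : ℝ} {w : ℂ} (hre : |w.re| ≤ r) (him : |w.im| = r) :
    ‖w ^ 2 - (r : ℂ) ^ 2‖ ≤ 3 * r * |w.im| := by
  have hr : 0 ≤ r := him ▸ abs_nonneg _
  calc ‖w ^ 2 - (r : ℂ) ^ 2‖ ≤ ‖w‖ ^ 2 + r ^ 2 := by
        refine (norm_sub_le _ _).trans_eq ?_
        rw [norm_pow, norm_pow, norm_real, Real.norm_of_nonneg hr]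
    _ = |w.re| ^ 2 + |w.im| ^ 2 + r ^ 2 := by
        rw [sq_abs, sq_abs, Complex.sq_norm, Complex.normSq_apply]; ring
    _ ≤ 3 * r * |w.im| := by rw [him]; nlinarith [abs_nonneg w.re]

theorem norm_sq_sub_sq_le_of_mem_frontier {r : ℝ} (hr : 0 < r) {w : ℂ}
    (hw : w ∈ frontier (Ioo (-r) r ×ℂ Ioo (-r) r)) :
    ‖w ^ 2 - (r : ℂ) ^ 2‖ ≤ 3 * r * |w.im| := by
  have hrr : -r ≠ r := by linarith
  rw [frontier_reProdIm, closure_Ioo hrr, frontier_Ioo (by linarith)] at hw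
  rcases hw with ⟨hre, him⟩ | ⟨hre, him⟩ <;>
    simp only [mem_preimage, mem_Icc, mem_insert_iff, mem_singleton_iff] at hre him
  · refine norm_sq_sub_sq_le_of_abs_im_eq (abs_le.2 hre) ?_
    rcases him with h | h <;> simp [h, abs_of_pos hr]
  · refine norm_sq_sub_sq_le_of_abs_re_eq ?_ (abs_le.2 him)
    rcases hre with h | h <;> simp [h, abs_of_pos hr]

theorem norm_sq_sub_sq_mul_le {r M : ℝ} (hr : 0 < r) {F : ℂ → ℂ}
    (hF : ∀ z : ℂ, |z.re| ≤ r → |z.im| ≤ r → DifferentiableAt ℂ F z)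
    (hbound : ∀ z : ℂ, |z.re| ≤ r → |z.im| ≤ r → |z.im| * ‖F z‖ ≤ M)
    {z : ℂ} (hre : |z.re| ≤ r) (him : |z.im| ≤ r) :
    ‖z ^ 2 - (r : ℂ) ^ 2‖ * ‖F z‖ ≤ 3 * r * M := by
  have hclosure : closure (Ioo (-r) r ×ℂ Ioo (-r) r) = {w : ℂ | |w.re| ≤ r ∧ |w.im| ≤ r} := by
    rw [closure_reProdIm, closure_Ioo (by linarith)]
    ext w
    simp [mem_reProdIm, abs_le]
  have hG : DiffContOnCl ℂ (fun w ↦ (w ^ 2 - (r : ℂ) ^ 2) * F w) (Ioo (-r) r ×ℂ Ioo (-r) r) := by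
    refine DifferentiableOn.diffContOnCl fun w hw ↦ ?_
    rw [hclosure] at hw
    exact ((differentiableAt_id.pow 2).sub_const _ |>.mul
      (hF w hw.1 hw.2)).differentiableWithinAt
  have hfrontier : ∀ w ∈ frontier (Ioo (-r) r ×ℂ Ioo (-r) r),
      ‖(w ^ 2 - (r : ℂ) ^ 2) * F w‖ ≤ 3 * r * M := by
    intro w hw
    have hw' := hclosure ▸ frontier_subset_closure hw
    calc ‖(w ^ 2 - (r : ℂ) ^ 2) * F w‖ ≤ 3 * r * |w.im| * ‖F w‖ := by
          rw [norm_mul]; gcongr; exact norm_sq_sub_sq_le_of_mem_frontier hr hw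
      _ = 3 * r * (|w.im| * ‖F w‖) := by ring
      _ ≤ 3 * r * M := by gcongr; exact hbound w hw'.1 hw'.2
  have hbdd : Bornology.IsBounded (Ioo (-r) r ×ℂ Ioo (-r) r) :=
    (Metric.isBounded_Ioo _ _).reProdIm (Metric.isBounded_Ioo _ _)
  simpa [norm_mul] using
    norm_le_of_forall_mem_frontier_norm_le hbdd hG hfrontier (hclosure ▸ ⟨hre, him⟩)

theorem norm_ofReal_mul_I_sq_sub_sq (ν r : ℝ) :
    ‖((ν : ℂ) * I) ^ 2 - (r : ℂ) ^ 2‖ = ν ^ 2 + r ^ 2 := by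
  have : ((ν : ℂ) * I) ^ 2 - (r : ℂ) ^ 2 = -((ν ^ 2 + r ^ 2 : ℝ) : ℂ) := by
    push_cast; ring_nf; rw [I_sq]; ring
  rw [this, norm_neg, norm_real, Real.norm_of_nonneg (by positivity)]

end Complex

theorem stmt12_general (r M : ℝ) (hr : 0 < r) (F : ℂ → ℂ)
    (hF : ∀ z : ℂ, |z.re| ≤ r → |z.im| ≤ r → DifferentiableAt ℂ F z)
    (hbound : ∀ z : ℂ, |z.re| ≤ r → |z.im| ≤ r → z.im ≠ 0 →
      ‖F z‖ ≤ M / |z.im|) :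
    (∀ ν : ℝ, |ν| ≤ r → ‖F ((ν : ℂ) * Complex.I)‖ ≤ 3 * M / r) ∧
    (∀ z : ℂ, |z.re| ≤ r → |z.im| ≤ r → z ^ 2 ≠ (r : ℂ) ^ 2 →
      ‖F z‖ ≤ 3 * r * M / ‖z ^ 2 - (r : ℂ) ^ 2‖) := by
  have hM : 0 ≤ M := by
    have := hbound (r * I) (by simp [hr.le]) (by simp [abs_of_pos hr]) (by simp [hr.ne'])
    simp only [mul_I_im, ofReal_re, abs_of_pos hr] at this
    simpa [div_mul_cancel₀ _ hr.ne'] using mul_nonneg ((norm_nonneg _).trans this) hr.le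
  have habs_im_mul : ∀ z : ℂ, |z.re| ≤ r → |z.im| ≤ r → |z.im| * ‖F z‖ ≤ M := by
    intro z hre him
    rcases eq_or_ne z.im 0 with h | h
    · simpa [h] using hM
    · exact (le_div_iff₀' (abs_pos.2 h)).1 (hbound z hre him h)
  have hdiv : ∀ z : ℂ, |z.re| ≤ r → |z.im| ≤ r → z ^ 2 ≠ (r : ℂ) ^ 2 →
      ‖F z‖ ≤ 3 * r * M / ‖z ^ 2 - (r : ℂ) ^ 2‖ := fun z hre him hne ↦
    (le_div_iff₀' (norm_pos_iff.2 (sub_ne_zero.2 hne))).2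
      (norm_sq_sub_sq_mul_le hr hF habs_im_mul hre him)
  refine ⟨fun ν hν ↦ ?_, hdiv⟩
  have hν' : ((ν : ℂ) * I) ^ 2 ≠ (r : ℂ) ^ 2 := by
    rw [← sub_ne_zero, ← norm_ne_zero_iff, norm_ofReal_mul_I_sq_sub_sq]; positivity
  calc ‖F ((ν : ℂ) * I)‖ ≤ 3 * r * M / (ν ^ 2 + r ^ 2) := by
        simpa [norm_ofReal_mul_I_sq_sub_sq] using
          hdiv _ (by simp [hr.le]) (by simpa using hν) hν'
    _ ≤ 3 * r * M / r ^ 2 := by gcongr; nlinarith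
    _ = 3 * M / r := by field_simp

/-- Phragmén–Lindelöf type bound on a square: if `F` is analytic on the closed square
`{μ+iν : |μ| ≤ r, |ν| ≤ r}` and `|F(μ+iν)| ≤ M/|ν|` there (for `ν ≠ 0`), then
`|F(iν)| ≤ 3M/r` for `|ν| ≤ r`; in fact `|F(λ)| ≤ 3rM/|λ² - r²|` on the square. -/
theorem stmt12 (r M : ℝ) (hr : 0 < r) (hM : 0 < M) (F : ℂ → ℂ)
    (hF : ∀ z : ℂ, |z.re| ≤ r → |z.im| ≤ r → DifferentiableAt ℂ F z)
    (hbound : ∀ z : ℂ, |z.re| ≤ r → |z.im| ≤ r → z.im ≠ 0 →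
      ‖F z‖ ≤ M / |z.im|) :
    (∀ ν : ℝ, |ν| ≤ r → ‖F ((ν : ℂ) * Complex.I)‖ ≤ 3 * M / r) ∧
    (∀ z : ℂ, |z.re| ≤ r → |z.im| ≤ r → z ^ 2 ≠ (r : ℂ) ^ 2 →
      ‖F z‖ ≤ 3 * r * M / ‖z ^ 2 - (r : ℂ) ^ 2‖) :=
  stmt12_general r M hr F hF hbound
end

section
/- With G(λ) = (λ²−r²)F(λ) where F is analytic on the square [−r,r]×[−r,r] and |F(μ+iν)| ≤ M/|ν|: on the horizontal sides ν = ±r one has |G(λ)| ≤ 3rM, and on the vertical sides μ = ±r one has |G(λ)| ≤ 3rM; hence by the maximum modulus principle |G(λ)| ≤ 3rM throughout the square. -/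
/-!
On a horizontal side `|ν| = r`, so `|F| ≤ M / r` while `|λ² - r²| ≤ |λ|² + r² ≤ 3r²`. On a vertical
side `μ = ±r` one factor of `λ² - r² = (λ - r)(λ + r)` has modulus `|ν|`, which cancels the
`M / |ν|` blow-up of `F` near the real axis. The maximum modulus principle on the square then
propagates the bound `3rM` from the boundary to the interior.
-/

open Set Complex

theorem Complex.norm_le_of_forall_mem_sides_reProdIm {E : Type*} [NormedAddCommGroup E]
    [NormedSpace ℂ E] {f : ℂ → E} {a b c d C : ℝ} (hab : a < b) (hcd : c < d)
    (hf : DifferentiableOn ℂ f (Icc a b ×ℂ Icc c d))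
    (horizontal : ∀ z ∈ Icc a b ×ℂ {c, d}, ‖f z‖ ≤ C)
    (vertical : ∀ z ∈ ({a, b} : Set ℝ) ×ℂ Icc c d, ‖f z‖ ≤ C) :
    ∀ z ∈ Icc a b ×ℂ Icc c d, ‖f z‖ ≤ C := by
  have hclosure : closure (Ioo a b ×ℂ Ioo c d) = Icc a b ×ℂ Icc c d := by
    rw [closure_reProdIm, closure_Ioo hab.ne, closure_Ioo hcd.ne]
  have hfrontier : frontier (Ioo a b ×ℂ Ioo c d) =
      Icc a b ×ℂ {c, d} ∪ ({a, b} : Set ℝ) ×ℂ Icc c d := by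
    rw [frontier_reProdIm, closure_Ioo hab.ne, closure_Ioo hcd.ne, frontier_Ioo hab,
      frontier_Ioo hcd]
  intro z hz
  refine norm_le_of_forall_mem_frontier_norm_le
    ((Metric.isBounded_Ioo a b).reProdIm (Metric.isBounded_Ioo c d))
    (DifferentiableOn.diffContOnCl (hclosure ▸ hf)) ?_ (hclosure ▸ hz)
  rw [hfrontier]
  rintro w (hw | hw)
  exacts [horizontal w hw, vertical w hw]

theorem Complex.norm_sq_sub_sq_le_of_abs_le {z : ℂ} {r : ℝ} (hre : |z.re| ≤ r) (him : |z.im| ≤ r) :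
    ‖z ^ 2 - (r : ℂ) ^ 2‖ ≤ 3 * r ^ 2 := by
  have hre2 : z.re ^ 2 ≤ r ^ 2 := sq_le_sq.mpr (hre.trans (le_abs_self r))
  have him2 : z.im ^ 2 ≤ r ^ 2 := sq_le_sq.mpr (him.trans (le_abs_self r))
  calc ‖z ^ 2 - (r : ℂ) ^ 2‖ ≤ ‖z‖ ^ 2 + r ^ 2 := 
        (norm_sub_le _ _).trans_eq (by rw [norm_pow, norm_pow, norm_real, Real.norm_eq_abs, sq_abs])
    _ = z.re ^ 2 + z.im ^ 2 + r ^ 2 := by rw [Complex.sq_norm, normSq_apply]; ring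
    _ ≤ 3 * r ^ 2 := by linarith

theorem Complex.norm_sq_sub_sq_le_of_re_eq_s13 {z : ℂ} {r : ℝ} (hre : z.re = r) (him : |z.im| ≤ r) :
    ‖z ^ 2 - (r : ℂ) ^ 2‖ ≤ 3 * r * |z.im| := by
  have hr : 0 ≤ r := (abs_nonneg _).trans him
  have hsub : ‖z - r‖ = |z.im| := by
    have : z - r = z.im * I := ext (by simp [hre]) (by simp)
    rw [this, norm_mul, norm_real, Real.norm_eq_abs, norm_I, mul_one]
  have hadd : ‖z + r‖ ≤ 3 * r := calc
    ‖z + r‖ ≤ ‖z‖ + ‖(r : ℂ)‖ := norm_add_le _ _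
    _ ≤ |z.re| + |z.im| + r := by
        rw [norm_real, Real.norm_of_nonneg hr]
        exact add_le_add_left (norm_le_abs_re_add_abs_im z) _
    _ ≤ 3 * r := by rw [hre, abs_of_nonneg hr]; linarith
  calc ‖z ^ 2 - (r : ℂ) ^ 2‖ = ‖z - r‖ * ‖z + r‖ := by rw [← norm_mul]; ring_nf
    _ ≤ |z.im| * (3 * r) := by rw [hsub]; exact mul_le_mul_of_nonneg_left hadd (abs_nonneg _)
    _ = 3 * r * |z.im| := by ring

theorem Complex.norm_sq_sub_sq_le_of_re_eq_or {z : ℂ} {r : ℝ} (hre : z.re = r ∨ z.re = -r)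
    (him : |z.im| ≤ r) : ‖z ^ 2 - (r : ℂ) ^ 2‖ ≤ 3 * r * |z.im| := by
  rcases hre with hre | hre
  · exact norm_sq_sub_sq_le_of_re_eq_s13 hre him
  · simpa using norm_sq_sub_sq_le_of_re_eq_s13 (z := -z) (by simp [hre]) (by simpa using him)

section SquareBound

variable {r M : ℝ} {F : ℂ → ℂ}

theorem norm_sq_sub_sq_mul_le_of_abs_im_eq (hr : 0 < r)
    (hbound : ∀ z : ℂ, |z.re| ≤ r → |z.im| ≤ r → z.im ≠ 0 → ‖F z‖ ≤ M / |z.im|)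
    {z : ℂ} (hre : |z.re| ≤ r) (him : |z.im| = r) :
    ‖(z ^ 2 - (r : ℂ) ^ 2) * F z‖ ≤ 3 * r * M := by
  have hF : ‖F z‖ ≤ M / r := him ▸ hbound z hre him.le (abs_pos.mp (him ▸ hr))
  calc ‖(z ^ 2 - (r : ℂ) ^ 2) * F z‖ = ‖z ^ 2 - (r : ℂ) ^ 2‖ * ‖F z‖ := norm_mul _ _
    _ ≤ 3 * r ^ 2 * (M / r) :=
        mul_le_mul (norm_sq_sub_sq_le_of_abs_le hre him.le) hF (norm_nonneg _) (by positivity)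
    _ = 3 * r * M := by field_simp

theorem norm_sq_sub_sq_mul_le_of_re_eq_or (hr : 0 ≤ r) (hM : 0 ≤ M)
    (hbound : ∀ z : ℂ, |z.re| ≤ r → |z.im| ≤ r → z.im ≠ 0 → ‖F z‖ ≤ M / |z.im|)
    {z : ℂ} (hre : z.re = r ∨ z.re = -r) (him : |z.im| ≤ r) :
    ‖(z ^ 2 - (r : ℂ) ^ 2) * F z‖ ≤ 3 * r * M := by
  have hre_abs : |z.re| = r := by rcases hre with h | h <;> simp [h, abs_of_nonneg hr]
  by_cases him0 : z.im = 0
  · have hzero : z ^ 2 - (r : ℂ) ^ 2 = 0 := by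
      simpa [him0] using norm_sq_sub_sq_le_of_re_eq_or hre him
    rw [hzero, zero_mul, norm_zero]
    positivity
  · have him_pos : 0 < |z.im| := abs_pos.mpr him0
    calc ‖(z ^ 2 - (r : ℂ) ^ 2) * F z‖ = ‖z ^ 2 - (r : ℂ) ^ 2‖ * ‖F z‖ := norm_mul _ _
      _ ≤ 3 * r * |z.im| * (M / |z.im|) :=
          mul_le_mul (norm_sq_sub_sq_le_of_re_eq_or hre him) (hbound z hre_abs.le him him0)
            (norm_nonneg _) (by positivity)
      _ = 3 * r * M := by field_simp

end SquareBound

/-- With `G(λ) = (λ²−r²)F(λ)`, `F` analytic on the square `[−r,r]×[−r,r]` with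
`|F(μ+iν)| ≤ M/|ν|`: on the horizontal sides `ν = ±r` and on the vertical sides
`μ = ±r` one has `|G(λ)| ≤ 3rM`; hence, by the maximum modulus principle,
`|G(λ)| ≤ 3rM` throughout the square. -/
theorem stmt13 (r M : ℝ) (hr : 0 < r) (hM : 0 < M) (F : ℂ → ℂ)
    (hF : ∀ z : ℂ, |z.re| ≤ r → |z.im| ≤ r → DifferentiableAt ℂ F z)
    (hbound : ∀ z : ℂ, |z.re| ≤ r → |z.im| ≤ r → z.im ≠ 0 →
      ‖F z‖ ≤ M / |z.im|) :
    (∀ z : ℂ, |z.re| ≤ r → (z.im = r ∨ z.im = -r) →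
      ‖(z ^ 2 - (r : ℂ) ^ 2) * F z‖ ≤ 3 * r * M) ∧
    (∀ z : ℂ, |z.im| ≤ r → (z.re = r ∨ z.re = -r) →
      ‖(z ^ 2 - (r : ℂ) ^ 2) * F z‖ ≤ 3 * r * M) ∧
    (∀ z : ℂ, |z.re| ≤ r → |z.im| ≤ r →
      ‖(z ^ 2 - (r : ℂ) ^ 2) * F z‖ ≤ 3 * r * M) := by
  have horizontal : ∀ z : ℂ, |z.re| ≤ r → (z.im = r ∨ z.im = -r) →
      ‖(z ^ 2 - (r : ℂ) ^ 2) * F z‖ ≤ 3 * r * M := fun z hre him =>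
    norm_sq_sub_sq_mul_le_of_abs_im_eq hr hbound hre ((abs_eq hr.le).mpr him)
  have vertical : ∀ z : ℂ, |z.im| ≤ r → (z.re = r ∨ z.re = -r) →
      ‖(z ^ 2 - (r : ℂ) ^ 2) * F z‖ ≤ 3 * r * M := fun z him hre =>
    norm_sq_sub_sq_mul_le_of_re_eq_or hr.le hM.le hbound hre him
  refine ⟨horizontal, vertical, fun z hre him => ?_⟩
  refine norm_le_of_forall_mem_sides_reProdIm (f := fun w => (w ^ 2 - (r : ℂ) ^ 2) * F w)
    (neg_lt_self hr) (neg_lt_self hr) ?_ ?_ ?_ z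
    ⟨abs_le.mp hre, abs_le.mp him⟩
  · exact fun w ⟨hwre, hwim⟩ => ((differentiableAt_id.pow 2).sub_const _ |>.mul
      (hF w (abs_le.mpr hwre) (abs_le.mpr hwim))).differentiableWithinAt
  · exact fun w ⟨hwre, hwim⟩ => horizontal w (abs_le.mpr hwre) hwim.symm
  · exact fun w ⟨hwre, hwim⟩ => vertical w (abs_le.mpr hwim) hwre.symm
end

section
/- (Bound on m(λ) near the real axis) Suppose for nonreal λ = μ+iν, the value l lies on the circle C_b, so that ∫_0^b |θ+lφ|² d_q x ≤ |l|/|ν|. Then |l| ≤ (|ν| ∫_0^b |φ|² d_q x)^{-1} + { 2∫_0^b|θ|² d_q x / ∫_0^b|φ|² d_q x + (|ν| ∫_0^b |φ|² d_q x)^{-2} }^{1/2}. In particular, for fixed b with ∫_0^b|φ|²d_q x > 0, l = O(1/|ν|) as ν → 0. -/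
/- Write `L = |l|` and `P, T` for the Jackson integrals of `|φ|²` and `|θ|²` over `[0, b]`.
Since `lφ = (θ + lφ) - θ`, the pointwise bound `|lφ|² ≤ 2(|θ|² + |θ + lφ|²)` integrates, against
the positive weights of the Jackson integral, to `L²P/2 ≤ T + L/|ν|`. This is a quadratic
inequality `L² ≤ 2T/P + 2cL` with `c = (|ν|P)⁻¹`, i.e. `(L - c)² ≤ 2T/P + c²`. -/

lemma norm_sq_le_two_mul_add {E : Type*} [SeminormedAddCommGroup E] (x y : E) :
    ‖y‖ ^ 2 ≤ 2 * (‖x‖ ^ 2 + ‖x + y‖ ^ 2) := by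
  have htri : ‖y‖ ≤ ‖x‖ + ‖x + y‖ := by
    simpa [add_comm] using norm_sub_le (x + y) x
  calc ‖y‖ ^ 2 ≤ (‖x‖ + ‖x + y‖) ^ 2 := pow_le_pow_left₀ (norm_nonneg y) htri 2
    _ ≤ 2 * (‖x‖ ^ 2 + ‖x + y‖ ^ 2) := add_sq_le

lemma le_add_sqrt_of_sq_le {x c A : ℝ} (h : x ^ 2 ≤ A + 2 * c * x) : x ≤ c + √(A + c ^ 2) := by
  have hsq : (x - c) ^ 2 ≤ A + c ^ 2 := by nlinarith
  linarith [le_abs_self (x - c), Real.abs_le_sqrt hsq]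

lemma le_inv_add_sqrt_of_sq_mul_le {L a P T : ℝ} (hP : 0 < P) (h : L ^ 2 / 2 * P ≤ T + L / a) :
    L ≤ (a * P)⁻¹ + √(2 * T / P + ((a * P)⁻¹) ^ 2) := by
  refine le_add_sqrt_of_sq_le ?_
  have hcL : (a * P)⁻¹ * L = L / a / P := by rw [div_div, div_eq_inv_mul]
  rw [mul_assoc, hcL, ← mul_div_assoc, ← add_div, le_div_iff₀ hP]
  linarith

section Jackson

variable {q b : ℝ} {f g : ℝ → ℝ}

lemma jackson0bR_const_mul (c : ℝ) :
    jackson0bR q (fun x => c * f x) b = c * jackson0bR q f b := by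
  simp only [jackson0bR, mul_left_comm _ c, tsum_mul_left]

lemma jackson0bR_add (hf : Summable fun n : ℕ => q ^ n * b * f (b * q ^ n))
    (hg : Summable fun n : ℕ => q ^ n * b * g (b * q ^ n)) :
    jackson0bR q (fun x => f x + g x) b = jackson0bR q f b + jackson0bR q g b := by
  simp only [jackson0bR, mul_add, hf.tsum_add hg]

lemma jackson0bR_mono (hq0 : 0 ≤ q) (hq1 : q ≤ 1) (hb : 0 ≤ b)
    (hf : Summable fun n : ℕ => q ^ n * b * f (b * q ^ n))
    (hg : Summable fun n : ℕ => q ^ n * b * g (b * q ^ n))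
    (hfg : ∀ n : ℕ, f (b * q ^ n) ≤ g (b * q ^ n)) :
    jackson0bR q f b ≤ jackson0bR q g b := by
  refine mul_le_mul_of_nonneg_left (hf.tsum_le_tsum (fun n => ?_) hg) (by linarith)
  exact mul_le_mul_of_nonneg_left (hfg n) (by positivity)

end Jackson

theorem stmt14_general (q : ℝ) (hq0 : 0 < q) (hq1 : q < 1) (nu : ℝ)
    (theta phi : ℝ → ℂ) (l : ℂ) (k : ℤ) (b : ℝ) (hb : b = q ^ k)
    (hSphi : Summable (fun n : ℕ => q ^ n * b * ‖phi (b * q ^ n)‖ ^ 2))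
    (hStheta : Summable (fun n : ℕ => q ^ n * b * ‖theta (b * q ^ n)‖ ^ 2))
    (hSc : Summable (fun n : ℕ =>
      q ^ n * b * ‖theta (b * q ^ n) + l * phi (b * q ^ n)‖ ^ 2))
    (hIphi : 0 < jackson0bR q (fun x => ‖phi x‖ ^ 2) b)
    (h1 : jackson0bR q (fun x => ‖theta x + l * phi x‖ ^ 2) b
      ≤ ‖l‖ / |nu|) :
    ‖l‖
      ≤ (|nu| * jackson0bR q (fun x => ‖phi x‖ ^ 2) b)⁻¹
        + Real.sqrt (2 * jackson0bR q (fun x => ‖theta x‖ ^ 2) b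
              / jackson0bR q (fun x => ‖phi x‖ ^ 2) b
            + ((|nu| * jackson0bR q (fun x => ‖phi x‖ ^ 2) b)⁻¹) ^ 2) := by
  have hb0 : 0 ≤ b := hb ▸ (zpow_pos hq0 k).le
  refine le_inv_add_sqrt_of_sq_mul_le hIphi ?_
  calc ‖l‖ ^ 2 / 2 * jackson0bR q (fun x => ‖phi x‖ ^ 2) b
      = jackson0bR q (fun x => ‖l‖ ^ 2 / 2 * ‖phi x‖ ^ 2) b := (jackson0bR_const_mul _).symm
    _ ≤ jackson0bR q (fun x => ‖theta x‖ ^ 2 + ‖theta x + l * phi x‖ ^ 2) b := by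
      refine jackson0bR_mono hq0.le hq1.le hb0 ((hSphi.mul_left (‖l‖ ^ 2 / 2)).congr fun n => ?_)
        ((hStheta.add hSc).congr fun n => ?_) fun n => ?_
      · ring
      · ring
      · have := norm_sq_le_two_mul_add (theta (b * q ^ n)) (l * phi (b * q ^ n))
        rw [norm_mul, mul_pow] at this
        linarith
    _ = jackson0bR q (fun x => ‖theta x‖ ^ 2) b
          + jackson0bR q (fun x => ‖theta x + l * phi x‖ ^ 2) b := jackson0bR_add hStheta hSc
    _ ≤ jackson0bR q (fun x => ‖theta x‖ ^ 2) b + ‖l‖ / |nu| := by gcongr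

/-- Bound on points of the circle `C_b`: if `∫_0^b |θ+lφ|² d_q x ≤ |l|/|ν|`, then
`|l| ≤ (|ν| ∫_0^b |φ|²)⁻¹ + √( 2∫_0^b|θ|² / ∫_0^b|φ|² + (|ν| ∫_0^b |φ|²)⁻² )`. -/
theorem stmt14 (q : ℝ) (hq0 : 0 < q) (hq1 : q < 1) (nu : ℝ) (hnu : nu ≠ 0)
    (theta phi : ℝ → ℂ) (l : ℂ) (k : ℤ) (b : ℝ) (hb : b = q ^ k)
    (hSphi : Summable (fun n : ℕ => q ^ n * b * ‖phi (b * q ^ n)‖ ^ 2))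
    (hStheta : Summable (fun n : ℕ => q ^ n * b * ‖theta (b * q ^ n)‖ ^ 2))
    (hSc : Summable (fun n : ℕ =>
      q ^ n * b * ‖theta (b * q ^ n) + l * phi (b * q ^ n)‖ ^ 2))
    (hIphi : 0 < jackson0bR q (fun x => ‖phi x‖ ^ 2) b)
    (h1 : jackson0bR q (fun x => ‖theta x + l * phi x‖ ^ 2) b
      ≤ ‖l‖ / |nu|) :
    ‖l‖
      ≤ (|nu| * jackson0bR q (fun x => ‖phi x‖ ^ 2) b)⁻¹
        + Real.sqrt (2 * jackson0bR q (fun x => ‖theta x‖ ^ 2) b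
              / jackson0bR q (fun x => ‖phi x‖ ^ 2) b
            + ((|nu| * jackson0bR q (fun x => ‖phi x‖ ^ 2) b)⁻¹) ^ 2) :=
  stmt14_general q hq0 hq1 nu theta phi l k b hb hSphi hStheta hSc hIphi h1
end
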